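/- In a regular multigrid, for any two vertices A and B lying on a common grid line ℓ, the path from A to B that follows ℓ through all intermediate intersection points is a shortest path in the multigrid graph; equivalently, the graph distance between A and B equals one plus the number of grid lines crossing ℓ strictly between A and B. -/

import Mathlib

open Set

noncomputable section

/-- Scalar product on `ℂ ≅ ℝ²`: `z·w := Re(z * conj w)`. -/
def dotp (z w : ℂ) : ℝ := (z * (starRingEnd ℂ) w).re

/-- Orthogonal vector: `ζ^⊥ := iζ`. -/
def perp (ζ : ℂ) : ℂ := Complex.I * ζ

/-- `z` lies on the grid `G(ζᵢ, γᵢ)`. -/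
def onGrid {d : ℕ} (ζ : Fin d → ℂ) (γ : Fin d → ℝ) (i : Fin d) (z : ℂ) : Prop :=
  ∃ m : ℤ, dotp z (ζ i) - γ i = m

/-- A multigrid vertex: an intersection point of two grid lines of distinct directions. -/
def IsVertex {d : ℕ} (ζ : Fin d → ℂ) (γ : Fin d → ℝ) (z : ℂ) : Prop :=
  ∃ i j : Fin d, i ≠ j ∧ onGrid ζ γ i z ∧ onGrid ζ γ j z

/-- The multigrid is regular: no point lies on grids of three distinct directions. -/
def Regular {d : ℕ} (ζ : Fin d → ℂ) (γ : Fin d → ℝ) : Prop :=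
  ∀ z : ℂ, Set.ncard {i : Fin d | onGrid ζ γ i z} ≤ 2

/-- `a` and `b` lie on a common line of the grid of direction `i`. -/
def SameLine {d : ℕ} (ζ : Fin d → ℂ) (γ : Fin d → ℝ) (i : Fin d) (a b : ℂ) : Prop :=
  onGrid ζ γ i a ∧ onGrid ζ γ i b ∧ ∃ t : ℝ, b - a = t • perp (ζ i)

/-- `c` lies strictly between `a` and `b` on the segment `[a,b]`. -/
def StrictBetween (a b c : ℂ) : Prop :=
  ∃ t : ℝ, 0 < t ∧ t < 1 ∧ c = a + t • (b - a)

/-- The multigrid graph: vertices are the intersection points of grid lines, and two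
vertices are adjacent when they are consecutive intersection points along a grid line. -/
def multigridGraph {d : ℕ} (ζ : Fin d → ℂ) (γ : Fin d → ℝ) : SimpleGraph ℂ where
  Adj a b := a ≠ b ∧ IsVertex ζ γ a ∧ IsVertex ζ γ b ∧
    ∃ i : Fin d, SameLine ζ γ i a b ∧
      ∀ c : ℂ, IsVertex ζ γ c → ¬ StrictBetween a b c
  symm := by
    constructor
    rintro a b ⟨hab, ha, hb, i, ⟨hga, hgb, t, ht⟩, hno⟩
    refine ⟨hab.symm, hb, ha, i, ⟨hgb, hga, -t, by rw [neg_smul, ← ht]; ring⟩, ?_⟩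
    rintro c hc ⟨s, hs0, hs1, hcs⟩
    exact hno c hc ⟨1 - s, by linarith, by linarith, by rw [hcs]; module⟩
  loopless := by constructor; rintro a ⟨h, _⟩; exact h rfl

/-!
Along `ℓ`, consecutive intersection points are adjacent, so following `ℓ` gives a walk of length
one plus the number of intermediate vertices. Conversely, every intermediate vertex lies on a
second grid line, and that line separates `A` from `B`. No edge crosses a grid line, and at a
vertex `v` a walk can get past at most one further line: by regularity, `v` lies on at most one
grid line besides the one carrying the incoming edge. Hence every walk from `A` to `B` has more
edges than there are lines separating `A` and `B`.
-/

open AffineMap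

theorem Set.mem_uIoo_or_eq_or_mem_uIoo {α : Type*} [LinearOrder α] {x y z m : α}
    (h : m ∈ uIoo x z) : m ∈ uIoo x y ∨ m = y ∨ m ∈ uIoo y z := by
  simp only [uIoo, mem_Ioo, inf_lt_iff, lt_sup_iff] at h ⊢
  grind

theorem openSegment_eq_uIoo {𝕜 : Type*} [Field 𝕜] [LinearOrder 𝕜] [IsStrictOrderedRing 𝕜]
    {x y : 𝕜} (h : x ≠ y) : openSegment 𝕜 x y = uIoo x y :=
  openSegment_eq_Ioo' h

theorem SimpleGraph.exists_walk_length_eq_ncard_add_one {V α : Type*} [LinearOrder α]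
    (G : SimpleGraph V) (L : α → V) {P : Set α}
    (hadj : ∀ s ∈ P, ∀ t ∈ P, s < t → P ∩ Ioo s t = ∅ → G.Adj (L s) (L t))
    {s t : α} (hs : s ∈ P) (ht : t ∈ P) (hst : s < t) (hfin : (P ∩ Ioo s t).Finite) :
    ∃ p : G.Walk (L s) (L t), p.length = (P ∩ Ioo s t).ncard + 1 := by
  induction hn : (P ∩ Ioo s t).ncard generalizing t with
  | zero => exact ⟨(hadj s hs t ht hst ((ncard_eq_zero hfin).1 hn)).toWalk, rfl⟩
  | succ n ih =>
    obtain ⟨r, ⟨hrP, hsr, hrt⟩, hmax⟩ :=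
      exists_max_image _ id hfin (nonempty_of_ncard_ne_zero (by omega))
    have hnext : P ∩ Ioo r t = ∅ := eq_empty_of_forall_notMem fun x ⟨hxP, hrx, hxt⟩ =>
      (hmax x ⟨hxP, hsr.trans hrx, hxt⟩).not_gt hrx
    have hprev : P ∩ Ioo s r = (P ∩ Ioo s t) \ {r} := by
      ext x
      refine ⟨fun ⟨hxP, hsx, hxr⟩ => ⟨⟨hxP, hsx, hxr.trans hrt⟩, hxr.ne⟩,
        fun ⟨⟨hxP, hsx, hxt⟩, hxr⟩ => ⟨hxP, hsx, ?_⟩⟩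
      exact (hmax x ⟨hxP, hsx, hxt⟩).lt_of_ne hxr
    obtain ⟨p, hp⟩ := ih hrP hsr (hprev ▸ hfin.sdiff) (by simp [hprev, hn, hrP, hsr, hrt])
    exact ⟨p.concat (hadj r hrP t ht hrt hnext), by simp [hp]⟩

lemma dotp_smul_left (t : ℝ) (v w : ℂ) : dotp (t • v) w = t * dotp v w := by
  simp [dotp, mul_assoc]

lemma dotp_perp_self (z : ℂ) : dotp (perp z) z = 0 := by
  simp [dotp, perp]; ring

lemma dotp_perp_ne_zero {z w : ℂ} (hz : z ≠ 0) (hw : ∀ t : ℝ, w ≠ t • z) :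
    dotp (perp z) w ≠ 0 := by
  intro h
  have hn : z.re ^ 2 + z.im ^ 2 ≠ 0 := by
    contrapose! hz; apply Complex.ext <;> simp <;> nlinarith [sq_nonneg z.re, sq_nonneg z.im]
  simp only [dotp, perp, Complex.mul_re, Complex.mul_im, Complex.I_re, Complex.I_im,
    Complex.conj_re, Complex.conj_im] at h
  -- `w` is then the real multiple `(dotp w z / ‖z‖ ^ 2) • z` of `z`
  apply hw ((w.re * z.re + w.im * z.im) / (z.re ^ 2 + z.im ^ 2))
  apply Complex.ext <;>
    simp only [Complex.real_smul, Complex.mul_re, Complex.mul_im, Complex.ofReal_re,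
      Complex.ofReal_im] <;>
    field_simp
  · linear_combination (-z.im) * h
  · linear_combination z.re * h

lemma setOf_strictBetween (a b : ℂ) : {c | StrictBetween a b c} = openSegment ℝ a b := by
  ext c; simp [StrictBetween, openSegment_eq_image', eq_comm, and_assoc]

section Multigrid

variable {d : ℕ} {ζ : Fin d → ℂ} {γ : Fin d → ℝ} {i j k : Fin d} {a b c A B : ℂ}

variable (ζ γ) in
/-- The grid lines of direction `j` are the integer level sets of `gridCoord ζ γ j`. -/
def gridCoord (j : Fin d) : ℂ →ᵃ[ℝ] ℝ where
  toFun z := dotp z (ζ j) - γ j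
  linear := Complex.reLm ∘ₗ LinearMap.mulRight ℝ (starRingEnd ℂ (ζ j))
  map_vadd' z v := by simp [dotp]; ring

variable (ζ γ) in
def intermediateVertices (a b : ℂ) : Set ℂ := {c | IsVertex ζ γ c ∧ StrictBetween a b c}

variable (ζ γ) in
/-- A pair `(j, m)` stands for the grid line `gridCoord ζ γ j = m`. -/
def separatingLines (a b : ℂ) : Set (Fin d × ℤ) :=
  {p | (p.2 : ℝ) ∈ uIoo (gridCoord ζ γ p.1 a) (gridCoord ζ γ p.1 b)}

lemma gridCoord_sub (j : Fin d) (a b : ℂ) :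
    gridCoord ζ γ j b - gridCoord ζ γ j a = dotp (b - a) (ζ j) :=
  ((gridCoord ζ γ j).linearMap_vsub b a).symm

lemma IsVertex.exists_ne_onGrid (h : IsVertex ζ γ c) (i : Fin d) : ∃ j ≠ i, onGrid ζ γ j c := by
  obtain ⟨j, k, hjk, hj, hk⟩ := h
  by_cases hji : j = i
  · exact ⟨k, hji ▸ hjk.symm, hk⟩
  · exact ⟨j, hji, hj⟩

lemma SameLine.gridCoord_eq (h : SameLine ζ γ i a b) : gridCoord ζ γ i a = gridCoord ζ γ i b := by
  obtain ⟨-, -, t, ht⟩ := h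
  have := gridCoord_sub (ζ := ζ) (γ := γ) i a b
  rw [ht, dotp_smul_left, dotp_perp_self, mul_zero] at this
  linarith

lemma SameLine.gridCoord_ne (hnonpar : ∀ j k : Fin d, j ≠ k → ∀ t : ℝ, ζ k ≠ t • ζ j)
    (h : SameLine ζ γ i a b) (hab : a ≠ b) (hji : j ≠ i) :
    gridCoord ζ γ j a ≠ gridCoord ζ γ j b := by
  obtain ⟨-, -, t, ht⟩ := h
  have ht0 : t ≠ 0 := by rintro rfl; exact hab (sub_eq_zero.1 (by simpa using ht)).symm
  have hζ : ζ i ≠ 0 := by simpa using hnonpar j i hji 0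
  intro heq
  have := gridCoord_sub (ζ := ζ) (γ := γ) j a b
  rw [heq, sub_self, ht, dotp_smul_left, eq_comm, mul_eq_zero] at this
  exact this.elim ht0 (dotp_perp_ne_zero hζ (hnonpar i j hji.symm))

lemma SameLine.onGrid_lineMap (h : SameLine ζ γ i a b) (r : ℝ) :
    onGrid ζ γ i (lineMap a b r) := by
  obtain ⟨m, hm⟩ := h.1
  refine ⟨m, ?_⟩
  change gridCoord ζ γ i _ = _
  rw [apply_lineMap, ← h.gridCoord_eq, lineMap_same_apply]
  exact hm

lemma SameLine.lineMap (h : SameLine ζ γ i a b) (r s : ℝ) :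
    SameLine ζ γ i (lineMap a b r) (lineMap a b s) := by
  obtain ⟨t, ht⟩ := h.2.2
  refine ⟨h.onGrid_lineMap r, h.onGrid_lineMap s, (s - r) * t, ?_⟩
  rw [lineMap_apply_module', lineMap_apply_module', ← smul_smul, ← ht]
  module

lemma Regular.encard_onGrid_ne_le_one (hreg : Regular ζ γ) (hk : onGrid ζ γ k c) :
    {p : Fin d × ℤ | p.1 ≠ k ∧ gridCoord ζ γ p.1 c = p.2}.encard ≤ 1 := by
  refine encard_le_one_iff.2 ?_
  rintro ⟨j, m⟩ ⟨j', m'⟩ ⟨hjk, hm⟩ ⟨hj'k, hm'⟩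
  obtain rfl | hjj' := eq_or_ne j j'
  · exact Prod.ext rfl (Int.cast_injective (hm.symm.trans hm'))
  · have hsub : ({j, j', k} : Set (Fin d)) ⊆ {l | onGrid ζ γ l c} := by
      rintro l (rfl | rfl | rfl)
      exacts [⟨m, hm⟩, ⟨m', hm'⟩, hk]
    have := (ncard_le_ncard hsub).trans (hreg c)
    rw [ncard_insert_of_notMem (by simp [hjj', hjk]), ncard_pair hj'k] at this
    omega

lemma separatingLines_finite (a b : ℂ) : (separatingLines ζ γ a b).Finite := by
  refine (finite_iUnion fun j : Fin d => (finite_Ioo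
    ⌊gridCoord ζ γ j a ⊓ gridCoord ζ γ j b⌋ ⌈gridCoord ζ γ j a ⊔ gridCoord ζ γ j b⌉).image
      (Prod.mk j)).subset ?_
  rintro ⟨j, m⟩ ⟨h1, h2⟩
  exact mem_iUnion.2 ⟨j, m, ⟨Int.floor_lt.2 h1, Int.lt_ceil.2 h2⟩, rfl⟩

lemma separatingLines_eq_empty_of_adj (h : (multigridGraph ζ γ).Adj a b) :
    separatingLines ζ γ a b = ∅ := by
  obtain ⟨-, -, -, k, hk, hnone⟩ := h
  refine eq_empty_of_forall_notMem ?_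
  rintro ⟨j, m⟩ (hm : (m : ℝ) ∈ uIoo _ _)
  have hne : gridCoord ζ γ j a ≠ gridCoord ζ γ j b := by
    rintro heq; rw [heq, uIoo_self] at hm; exact hm
  rw [← openSegment_eq_uIoo hne, ← image_openSegment] at hm
  obtain ⟨c, hc, hcm⟩ := hm
  have hjk : j ≠ k := by rintro rfl; exact hne hk.gridCoord_eq
  have hck : onGrid ζ γ k c := by
    obtain ⟨r, -, rfl⟩ := (openSegment_eq_image_lineMap ℝ a b).subset hc
    exact hk.onGrid_lineMap r
  rw [← setOf_strictBetween] at hc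
  exact hnone c ⟨j, k, hjk, ⟨m, hcm⟩, hck⟩ hc

lemma separatingLines_subset_of_adj (hadj : (multigridGraph ζ γ).Adj a b)
    (hk : SameLine ζ γ k a b) (c : ℂ) :
    separatingLines ζ γ a c ⊆
      separatingLines ζ γ b c ∪ {p | p.1 ≠ k ∧ gridCoord ζ γ p.1 b = p.2} := by
  rintro ⟨j, m⟩ (hm : (m : ℝ) ∈ uIoo _ _)
  rcases mem_uIoo_or_eq_or_mem_uIoo (y := gridCoord ζ γ j b) hm with hab | hb | hbc
  · exact (eq_empty_iff_forall_notMem.1 (separatingLines_eq_empty_of_adj hadj) _ hab).elim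
  · refine Or.inr ⟨?_, hb.symm⟩
    rintro rfl
    rw [hk.gridCoord_eq, hb] at hm
    exact left_notMem_uIoo hm
  · exact Or.inl hbc

theorem SimpleGraph.Walk.encard_separatingLines_add_one_le_length (hreg : Regular ζ γ)
    (p : (multigridGraph ζ γ).Walk a b) (hab : a ≠ b) :
    (separatingLines ζ γ a b).encard + 1 ≤ p.length := by
  induction p with
  | nil => exact absurd rfl hab
  | @cons u v w huv q ih =>
    rw [length_cons, Nat.cast_add, Nat.cast_one]
    gcongr
    obtain rfl | hvw := eq_or_ne v w
    · simp [separatingLines_eq_empty_of_adj huv]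
    obtain ⟨k, hk, -⟩ := huv.2.2.2
    calc (separatingLines ζ γ u w).encard
        ≤ (separatingLines ζ γ v w ∪ {p | p.1 ≠ k ∧ gridCoord ζ γ p.1 v = p.2}).encard :=
          encard_le_encard (separatingLines_subset_of_adj huv hk w)
      _ ≤ (separatingLines ζ γ v w).encard + 1 :=
          (encard_union_le _ _).trans (by gcongr; exact hreg.encard_onGrid_ne_le_one hk.2.1)
      _ ≤ q.length := ih hvw

lemma intermediateVertices_subset_image_separatingLines
    (hnonpar : ∀ j k : Fin d, j ≠ k → ∀ t : ℝ, ζ k ≠ t • ζ j)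
    (hAB : A ≠ B) (hline : SameLine ζ γ i A B) :
    -- `(j, m)` is sent to the point of the line `AB` where `gridCoord ζ γ j = m`
    intermediateVertices ζ γ A B ⊆ (fun p : Fin d × ℤ => lineMap A B
      ((p.2 - gridCoord ζ γ p.1 A) / (gridCoord ζ γ p.1 B - gridCoord ζ γ p.1 A))) ''
        separatingLines ζ γ A B := by
  rintro c ⟨hc, hcAB⟩
  change c ∈ {c | StrictBetween A B c} at hcAB
  rw [setOf_strictBetween, openSegment_eq_image_lineMap] at hcAB
  obtain ⟨r, hr, rfl⟩ := hcAB
  obtain ⟨j, hji, m, hm⟩ := hc.exists_ne_onGrid i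
  have hne := hline.gridCoord_ne hnonpar hAB hji
  change gridCoord ζ γ j _ = _ at hm
  rw [apply_lineMap] at hm
  refine ⟨(j, m), ?_, ?_⟩
  · change (m : ℝ) ∈ uIoo _ _
    rw [← hm, ← openSegment_eq_uIoo hne]
    exact lineMap_mem_openSegment _ _ _ hr
  · dsimp only
    rw [← hm, lineMap_apply_ring', add_sub_cancel_right,
      mul_div_cancel_right₀ _ (sub_ne_zero.2 hne.symm)]

lemma exists_walk_along_line (hA : IsVertex ζ γ A) (hB : IsVertex ζ γ B) (hAB : A ≠ B)
    (hline : SameLine ζ γ i A B) (hfin : (intermediateVertices ζ γ A B).Finite) :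
    ∃ p : (multigridGraph ζ γ).Walk A B, p.length = (intermediateVertices ζ γ A B).ncard + 1 := by
  set L : ℝ →ᵃ[ℝ] ℂ := lineMap A B
  have hL : Function.Injective L := lineMap_injective ℝ hAB
  set P := {r : ℝ | IsVertex ζ γ (L r)}
  have hS : intermediateVertices ζ γ A B = L '' (P ∩ Ioo 0 1) := by
    change _ = L '' (L ⁻¹' {c | IsVertex ζ γ c} ∩ Ioo 0 1)
    rw [image_preimage_inter, ← openSegment_eq_image_lineMap, ← setOf_strictBetween]
    rfl
  have hadj : ∀ s ∈ P, ∀ t ∈ P, s < t → P ∩ Ioo s t = ∅ →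
      (multigridGraph ζ γ).Adj (L s) (L t) := by
    intro s hs t ht hst hempty
    refine ⟨hL.ne hst.ne, hs, ht, i, hline.lineMap s t, fun c hc hcst => ?_⟩
    change c ∈ {c | StrictBetween _ _ c} at hcst
    rw [setOf_strictBetween, ← image_openSegment, openSegment_eq_Ioo hst] at hcst
    obtain ⟨r, hr, rfl⟩ := hcst
    exact (eq_empty_iff_forall_notMem.1 hempty) r ⟨hc, hr⟩
  obtain ⟨p, hp⟩ := (multigridGraph ζ γ).exists_walk_length_eq_ncard_add_one L hadj
    (s := 0) (t := 1) (by simpa [P, L] using hA) (by simpa [P, L] using hB) one_pos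
    ((hS ▸ hfin).of_finite_image hL.injOn)
  refine ⟨p.copy (lineMap_apply_zero A B) (lineMap_apply_one A B), ?_⟩
  rw [SimpleGraph.Walk.length_copy, hp, hS, ncard_image_of_injective _ hL]

end Multigrid

theorem multigrid_distance_on_line_general {d : ℕ} (ζ : Fin d → ℂ) (γ : Fin d → ℝ)
    (hnonpar : ∀ j k : Fin d, j ≠ k → ∀ t : ℝ, ζ k ≠ t • ζ j)
    (hreg : Regular ζ γ)
    (A B : ℂ) (i : Fin d)
    (hA : IsVertex ζ γ A) (hB : IsVertex ζ γ B) (hAB : A ≠ B)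
    (hline : SameLine ζ γ i A B) :
    (multigridGraph ζ γ).dist A B
      = 1 + Set.ncard {c : ℂ | IsVertex ζ γ c ∧ StrictBetween A B c} := by
  have hsub := intermediateVertices_subset_image_separatingLines hnonpar hAB hline
  have hfin : (intermediateVertices ζ γ A B).Finite :=
    ((separatingLines_finite A B).image _).subset hsub
  obtain ⟨p, hp⟩ := exists_walk_along_line hA hB hAB hline hfin
  obtain ⟨q, hq⟩ := p.reachable.exists_walk_length_eq_dist
  refine le_antisymm ((SimpleGraph.dist_le p).trans_eq (by rw [hp, add_comm]; rfl)) ?_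
  rw [← hq, ← Nat.cast_le (α := ℕ∞), Nat.cast_add, Nat.cast_one, add_comm]
  calc ((intermediateVertices ζ γ A B).ncard : ℕ∞) + 1
      ≤ (separatingLines ζ γ A B).encard + 1 := by
        rw [hfin.cast_ncard_eq]
        gcongr
        exact (encard_le_encard hsub).trans (encard_image_le _ _)
    _ ≤ q.length := q.encard_separatingLines_add_one_le_length hreg hAB

/-- In a regular multigrid, for two vertices `A ≠ B` on a common grid line, the straight
path along the line is a shortest path: the graph distance between `A` and `B` equals one
plus the number of intermediate vertices (equivalently, of crossing lines) strictly
between `A` and `B` on the line. -/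
theorem multigrid_distance_on_line {d : ℕ} (ζ : Fin d → ℂ) (γ : Fin d → ℝ)
    (hunit : ∀ j, ‖ζ j‖ = 1)
    (hnonpar : ∀ j k : Fin d, j ≠ k → ∀ t : ℝ, ζ k ≠ t • ζ j)
    (hreg : Regular ζ γ)
    (A B : ℂ) (i : Fin d)
    (hA : IsVertex ζ γ A) (hB : IsVertex ζ γ B) (hAB : A ≠ B)
    (hline : SameLine ζ γ i A B) :
    (multigridGraph ζ γ).dist A B
      = 1 + Set.ncard {c : ℂ | IsVertex ζ γ c ∧ StrictBetween A B c} :=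
  multigrid_distance_on_line_general ζ γ hnonpar hreg A B i hA hB hAB hline
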